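/- arXiv:2208.02091 — 3 statements merged into one kernel-verified Lean document; each statement's English description precedes it below -/
import Mathlib

section
/- For any finite simple graph G with m edges, minimum degree δ ≥ 1 and maximum degree Δ: √2·π·(SO₁(G) + m·δ²)/Δ ≤ SO₃(G) ≤ √2·π·(SO₁(G) + m·Δ²)/δ, where SO₃(G) = Σ_{uv∈E(G)} √2·π·(d_u² + d_v²)/(d_u + d_v). -/
open Finset

noncomputable def deg {V : Type*} [Fintype V] (G : SimpleGraph V) (v : V) : ℕ := by
  classical exact G.degree v

noncomputable def minDeg {V : Type*} [Fintype V] [Nonempty V] (G : SimpleGraph V) : ℕ := by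
  classical exact G.minDegree

noncomputable def maxDeg {V : Type*} [Fintype V] (G : SimpleGraph V) : ℕ := by
  classical exact G.maxDegree

noncomputable def numEdges {V : Type*} [Fintype V] (G : SimpleGraph V) : ℕ := by
  classical exact G.edgeFinset.card

/-- Sum over the edges of `G` of a symmetric function of the degrees of the endpoints. -/
noncomputable def edgeDegSum {V : Type*} [Fintype V] (G : SimpleGraph V)
    (f : ℕ → ℕ → ℝ) (hf : ∀ a b, f a b = f b a) : ℝ := by
  classical
  exact ∑ e ∈ G.edgeFinset,
    Sym2.lift ⟨fun u v => f (deg G u) (deg G v), fun u v => hf _ _⟩ e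

noncomputable def SO1 {V : Type*} [Fintype V] (G : SimpleGraph V) : ℝ :=
  (1/2) * edgeDegSum G (fun a b => |(a : ℝ)^2 - (b : ℝ)^2|)
    (fun a b => by beta_reduce; rw [abs_sub_comm])

noncomputable def SO2 {V : Type*} [Fintype V] (G : SimpleGraph V) : ℝ :=
  edgeDegSum G (fun a b => |(a : ℝ)^2 - (b : ℝ)^2| / ((a : ℝ)^2 + (b : ℝ)^2))
    (fun a b => by beta_reduce; rw [abs_sub_comm, add_comm])

noncomputable def SO3 {V : Type*} [Fintype V] (G : SimpleGraph V) : ℝ :=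
  edgeDegSum G (fun a b => Real.sqrt 2 * (((a : ℝ)^2 + (b : ℝ)^2) / ((a : ℝ) + (b : ℝ))) * Real.pi)
    (fun a b => by beta_reduce; rw [add_comm ((a:ℝ)^2), add_comm (a:ℝ)])

noncomputable def SO4 {V : Type*} [Fintype V] (G : SimpleGraph V) : ℝ :=
  (1/2) * edgeDegSum G (fun a b => (((a : ℝ)^2 + (b : ℝ)^2) / ((a : ℝ) + (b : ℝ)))^2 * Real.pi)
    (fun a b => by beta_reduce; rw [add_comm ((a:ℝ)^2), add_comm (a:ℝ)])

noncomputable def SO5 {V : Type*} [Fintype V] (G : SimpleGraph V) : ℝ :=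
  edgeDegSum G
    (fun a b => 2 * |(a : ℝ)^2 - (b : ℝ)^2| /
      (Real.sqrt 2 + 2 * Real.sqrt ((a : ℝ)^2 + (b : ℝ)^2)) * Real.pi)
    (fun a b => by beta_reduce; rw [abs_sub_comm, add_comm ((a:ℝ)^2)])

noncomputable def SO6 {V : Type*} [Fintype V] (G : SimpleGraph V) : ℝ :=
  edgeDegSum G
    (fun a b => (((a : ℝ)^2 - (b : ℝ)^2) /
      (Real.sqrt 2 + 2 * Real.sqrt ((a : ℝ)^2 + (b : ℝ)^2)))^2 * Real.pi)
    (fun a b => by beta_reduce; rw [add_comm ((a:ℝ)^2)]; ring_nf)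

private lemma key_low (a b dm dM : ℝ) (h1 : 0 < dm) (ha1 : dm ≤ a) (hb1 : dm ≤ b)
    (ha2 : a ≤ dM) (hb2 : b ≤ dM) :
    Real.sqrt 2 * Real.pi * ((1 / 2 * |a^2 - b^2| + dm^2) / dM) ≤
      Real.sqrt 2 * ((a^2 + b^2) / (a + b)) * Real.pi := by
  have hab : 0 < a + b := by linarith
  have hdM : 0 < dM := lt_of_lt_of_le h1 (le_trans ha1 ha2)
  have h : (1 / 2 * |a^2 - b^2| + dm^2) / dM ≤ (a^2 + b^2) / (a + b) := by
    rw [div_le_div_iff₀ hdM hab]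
    rcases le_total a b with h | h
    · rw [abs_of_nonpos (by nlinarith)]
      have h2 : 1 / 2 * -(a^2 - b^2) + dm^2 ≤ (a^2 + b^2) / 2 := by nlinarith
      have h3 : a + b ≤ 2 * dM := by linarith
      have := mul_le_mul h2 h3 (by linarith) (by positivity)
      linarith
    · rw [abs_of_nonneg (by nlinarith)]
      have h2 : 1 / 2 * (a^2 - b^2) + dm^2 ≤ (a^2 + b^2) / 2 := by nlinarith
      have h3 : a + b ≤ 2 * dM := by linarith
      have := mul_le_mul h2 h3 (by linarith) (by positivity)
      linarith
  calc Real.sqrt 2 * Real.pi * ((1 / 2 * |a^2 - b^2| + dm^2) / dM)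
      ≤ Real.sqrt 2 * Real.pi * ((a^2 + b^2) / (a + b)) :=
        mul_le_mul_of_nonneg_left h (by positivity)
    _ = Real.sqrt 2 * ((a^2 + b^2) / (a + b)) * Real.pi := by ring

private lemma key_high (a b dm dM : ℝ) (h1 : 0 < dm) (ha1 : dm ≤ a) (hb1 : dm ≤ b)
    (ha2 : a ≤ dM) (hb2 : b ≤ dM) :
    Real.sqrt 2 * ((a^2 + b^2) / (a + b)) * Real.pi ≤
      Real.sqrt 2 * Real.pi * ((1 / 2 * |a^2 - b^2| + dM^2) / dm) := by
  have hab : 0 < a + b := by linarith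
  have hdM : 0 < dM := lt_of_lt_of_le h1 (le_trans ha1 ha2)
  have h : (a^2 + b^2) / (a + b) ≤ (1 / 2 * |a^2 - b^2| + dM^2) / dm := by
    rw [div_le_div_iff₀ hab h1]
    rcases le_total a b with h | h
    · rw [abs_of_nonpos (by nlinarith)]
      have h2 : (a^2 + b^2) / 2 ≤ 1 / 2 * -(a^2 - b^2) + dM^2 := by nlinarith
      have h3 : 2 * dm ≤ a + b := by linarith
      have := mul_le_mul h2 h3 (by positivity) (by nlinarith)
      linarith
    · rw [abs_of_nonneg (by nlinarith)]
      have h2 : (a^2 + b^2) / 2 ≤ 1 / 2 * (a^2 - b^2) + dM^2 := by nlinarith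
      have h3 : 2 * dm ≤ a + b := by linarith
      have := mul_le_mul h2 h3 (by positivity) (by nlinarith)
      linarith
  calc Real.sqrt 2 * ((a^2 + b^2) / (a + b)) * Real.pi
      = Real.sqrt 2 * Real.pi * ((a^2 + b^2) / (a + b)) := by ring
    _ ≤ Real.sqrt 2 * Real.pi * ((1 / 2 * |a^2 - b^2| + dM^2) / dm) :=
        mul_le_mul_of_nonneg_left h (by positivity)

theorem SO3_bounds {V : Type*} [Fintype V] [Nonempty V] (G : SimpleGraph V)
    (hδ : 1 ≤ minDeg G) :
    Real.sqrt 2 * Real.pi * ((SO1 G + (numEdges G : ℝ) * ((minDeg G : ℝ))^2) / (maxDeg G : ℝ))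
        ≤ SO3 G ∧
      SO3 G ≤ Real.sqrt 2 * Real.pi *
        ((SO1 G + (numEdges G : ℝ) * ((maxDeg G : ℝ))^2) / (minDeg G : ℝ)) := by
  classical
  have h1 : (0 : ℝ) < (minDeg G : ℝ) := by exact_mod_cast lt_of_lt_of_le zero_lt_one hδ
  have hdm : ∀ v : V, (minDeg G : ℝ) ≤ (deg G v : ℝ) := fun v => by
    exact_mod_cast G.minDegree_le_degree v
  have hdM : ∀ v : V, (deg G v : ℝ) ≤ (maxDeg G : ℝ) := fun v => by
    exact_mod_cast G.degree_le_maxDegree v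
  have hm : ∀ c : ℝ, ((numEdges G : ℝ) * c^2) = ∑ _e ∈ G.edgeFinset, c^2 := fun c => by
    rw [Finset.sum_const, nsmul_eq_mul]; rfl
  constructor
  · simp only [SO1, SO3, edgeDegSum]
    rw [hm, Finset.mul_sum, ← Finset.sum_add_distrib, Finset.sum_div, Finset.mul_sum]
    refine Finset.sum_le_sum fun e he => ?_
    induction e using Sym2.ind with
    | _ u v =>
      simp only [Sym2.lift_mk]
      exact key_low _ _ _ _ h1 (hdm u) (hdm v) (hdM u) (hdM v)
  · simp only [SO1, SO3, edgeDegSum]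
    rw [hm, Finset.mul_sum, ← Finset.sum_add_distrib, Finset.sum_div, Finset.mul_sum]
    refine Finset.sum_le_sum fun e he => ?_
    induction e using Sym2.ind with
    | _ u v =>
      simp only [Sym2.lift_mk]
      exact key_high _ _ _ _ h1 (hdm u) (hdm v) (hdM u) (hdM v)
end

section
/- For any finite simple graph G with m edges, minimum degree δ ≥ 1 and maximum degree Δ: (π·δ²/(2Δ²))·(m·δ² + SO₁(G)) ≤ SO₄(G) ≤ (π·Δ²/(2δ²))·(m·Δ² + SO₁(G)), where SO₄(G) = (π/2)·Σ_{uv∈E(G)} ((d_u² + d_v²)/(d_u + d_v))². -/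
open Finset

lemma aux_low (d D a b : ℝ) (hd : 1 ≤ d) (hda : d ≤ a) (hdb : d ≤ b)
    (haD : a ≤ D) (hbD : b ≤ D) :
    d^2/D^2 * (d^2 + |a^2 - b^2|/2) ≤ ((a^2+b^2)/(a+b))^2 := by
  have hb : 0 < b := by linarith
  have ha : 0 < a := by linarith
  have hD : 0 < D := by linarith
  have hab : 0 < a + b := by linarith
  rw [div_pow, div_mul_eq_mul_div, div_le_div_iff₀ (by positivity) (by positivity)]
  rcases abs_cases (a^2 - b^2) with ⟨h, h2⟩ | ⟨h, h2⟩ <;> rw [h]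
  · -- a ≥ b
    have hdb2 : d^2 ≤ b^2 := by nlinarith
    have h1 : d^2*(2*d^2+(a^2-b^2)) ≤ b^2*(2*b^2+(a^2-b^2)) := by
      nlinarith [mul_le_mul hdb2 hdb2 (by positivity) (by positivity),
        mul_le_mul_of_nonneg_left hdb2 h2]
    have h3 : b^2*(a+b)^2 ≤ 2*a^2*(a^2+b^2) := by nlinarith [sq_nonneg (a-b)]
    have h4 := mul_le_mul_of_nonneg_right (show a^2 ≤ D^2 by nlinarith)
      (sq_nonneg (a^2+b^2))
    nlinarith [mul_le_mul_of_nonneg_right h1 (sq_nonneg (a+b)),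
      mul_le_mul_of_nonneg_left h3 (by positivity : (0:ℝ) ≤ a^2+b^2)]
  · -- b > a
    have hda2 : d^2 ≤ a^2 := by nlinarith
    have h2' : (0:ℝ) ≤ b^2 - a^2 := by nlinarith
    have h1 : d^2*(2*d^2+(b^2-a^2)) ≤ a^2*(2*a^2+(b^2-a^2)) := by
      nlinarith [mul_le_mul hda2 hda2 (by positivity) (by positivity),
        mul_le_mul_of_nonneg_left hda2 h2']
    have h3 : a^2*(a+b)^2 ≤ 2*b^2*(a^2+b^2) := by nlinarith [sq_nonneg (a-b)]
    have h4 := mul_le_mul_of_nonneg_right (show b^2 ≤ D^2 by nlinarith)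
      (sq_nonneg (a^2+b^2))
    nlinarith [mul_le_mul_of_nonneg_right h1 (sq_nonneg (a+b)),
      mul_le_mul_of_nonneg_left h3 (by positivity : (0:ℝ) ≤ a^2+b^2)]

lemma aux_up (d D a b : ℝ) (hd : 1 ≤ d) (hda : d ≤ a) (hdb : d ≤ b)
    (haD : a ≤ D) (hbD : b ≤ D) :
    ((a^2+b^2)/(a+b))^2 ≤ D^2/d^2 * (D^2 + |a^2 - b^2|/2) := by
  have hb : 0 < b := by linarith
  have ha : 0 < a := by linarith
  have hD : 0 < D := by linarith
  have hab : 0 < a + b := by linarith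
  have h1 : (a^2+b^2)/(a+b) ≤ D := by rw [div_le_iff₀ hab]; nlinarith
  have h2 : (0:ℝ) ≤ (a^2+b^2)/(a+b) := by positivity
  have hT : ((a^2+b^2)/(a+b))^2 ≤ D^2 := by nlinarith
  have h3 : 1 ≤ D^2/d^2 := (one_le_div (by positivity)).2 (by nlinarith)
  have h4 : D^2 ≤ D^2 + |a^2-b^2|/2 := le_add_of_nonneg_right (by positivity)
  calc ((a^2+b^2)/(a+b))^2 ≤ D^2 := hT
    _ = 1 * D^2 := (one_mul _).symm
    _ ≤ D^2/d^2 * (D^2 + |a^2-b^2|/2) :=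
        mul_le_mul h3 h4 (by positivity) (by positivity)

theorem SO4_bounds {V : Type*} [Fintype V] [Nonempty V] (G : SimpleGraph V)
    (hδ : 1 ≤ minDeg G) :
    Real.pi * ((minDeg G : ℝ))^2 / (2 * ((maxDeg G : ℝ))^2) *
        ((numEdges G : ℝ) * ((minDeg G : ℝ))^2 + SO1 G) ≤ SO4 G ∧
      SO4 G ≤ Real.pi * ((maxDeg G : ℝ))^2 / (2 * ((minDeg G : ℝ))^2) *
        ((numEdges G : ℝ) * ((maxDeg G : ℝ))^2 + SO1 G) := by
  classical
  have hπ := Real.pi_pos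
  set δ : ℝ := (minDeg G : ℝ) with hδ'
  set Δ : ℝ := (maxDeg G : ℝ) with hΔ'
  have hmin : minDeg G = G.minDegree := rfl
  have hmax : maxDeg G = G.maxDegree := rfl
  have hdg : ∀ v, deg G v = G.degree v := fun _ => rfl
  have hd1 : (1:ℝ) ≤ δ := by rw [hδ']; exact_mod_cast hδ
  have hdegl : ∀ v : V, δ ≤ (deg G v : ℝ) := by
    intro v
    rw [hδ', hmin, hdg]
    exact_mod_cast G.minDegree_le_degree v
  have hdegu : ∀ v : V, (deg G v : ℝ) ≤ Δ := by
    intro v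
    rw [hΔ', hmax, hdg]
    exact_mod_cast G.degree_le_maxDegree v
  have hΔ1 : (1:ℝ) ≤ Δ := le_trans hd1 (le_trans (hdegl (Classical.arbitrary V)) (hdegu _))
  set F1 : Sym2 V → ℝ := Sym2.lift ⟨fun u v => |((deg G u : ℝ))^2 - ((deg G v : ℝ))^2|,
    fun u v => by beta_reduce; rw [abs_sub_comm]⟩ with hF1
  set F4 : Sym2 V → ℝ := Sym2.lift ⟨fun u v =>
      ((((deg G u) : ℝ)^2 + ((deg G v) : ℝ)^2) / (((deg G u) : ℝ) + ((deg G v) : ℝ)))^2 * Real.pi,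
    fun u v => by beta_reduce; rw [add_comm (((deg G u):ℝ)^2), add_comm ((deg G u):ℝ)]⟩ with hF4
  have hSO1 : SO1 G = (1/2) * ∑ e ∈ G.edgeFinset, F1 e := rfl
  have hSO4 : SO4 G = (1/2) * ∑ e ∈ G.edgeFinset, F4 e := rfl
  have hm : (numEdges G : ℝ) = (G.edgeFinset.card : ℝ) := rfl
  constructor
  · have key : ∀ e ∈ G.edgeFinset,
        Real.pi * δ^2 / (2*Δ^2) * (δ^2 + F1 e / 2) ≤ (1/2) * F4 e := by
      intro e he
      induction e using Sym2.ind with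
      | _ u v =>
        simp only [hF1, hF4, Sym2.lift_mk]
        have := aux_low δ Δ ((deg G u : ℝ)) ((deg G v : ℝ)) hd1 (hdegl u) (hdegl v)
          (hdegu u) (hdegu v)
        have hΔ0 : (0:ℝ) < Δ^2 := by positivity
        rw [div_mul_eq_mul_div, div_le_iff₀ (by positivity)] at this ⊢
        nlinarith [this]
    have hsum := Finset.sum_le_sum key
    calc Real.pi * δ^2 / (2*Δ^2) * ((numEdges G : ℝ) * δ^2 + SO1 G)
        = ∑ e ∈ G.edgeFinset, Real.pi * δ^2 / (2*Δ^2) * (δ^2 + F1 e / 2) := by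
          rw [hSO1, hm]
          calc Real.pi * δ^2 / (2*Δ^2) * ((G.edgeFinset.card : ℝ) * δ^2
                + (1/2) * ∑ e ∈ G.edgeFinset, F1 e)
              = (G.edgeFinset.card : ℝ) * (Real.pi * δ^2 / (2*Δ^2) * δ^2)
                + ∑ e ∈ G.edgeFinset, (Real.pi * δ^2 / (2*Δ^2) / 2) * F1 e := by
                rw [← Finset.mul_sum]; ring
            _ = ∑ e ∈ G.edgeFinset, Real.pi * δ^2 / (2*Δ^2) * (δ^2 + F1 e / 2) := by
                rw [← nsmul_eq_mul, ← Finset.sum_const, ← Finset.sum_add_distrib]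
                exact Finset.sum_congr rfl fun e _ => by ring
      _ ≤ ∑ e ∈ G.edgeFinset, (1/2) * F4 e := hsum
      _ = SO4 G := by rw [hSO4, Finset.mul_sum]
  · have key : ∀ e ∈ G.edgeFinset,
        (1/2) * F4 e ≤ Real.pi * Δ^2 / (2*δ^2) * (Δ^2 + F1 e / 2) := by
      intro e he
      induction e using Sym2.ind with
      | _ u v =>
        simp only [hF1, hF4, Sym2.lift_mk]
        have := aux_up δ Δ ((deg G u : ℝ)) ((deg G v : ℝ)) hd1 (hdegl u) (hdegl v)
          (hdegu u) (hdegu v)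
        have hδ0 : (0:ℝ) < δ^2 := by positivity
        rw [div_mul_eq_mul_div, le_div_iff₀ hδ0] at this
        rw [show Real.pi * Δ^2 / (2*δ^2) * (Δ^2 + |((deg G u : ℝ))^2 - ((deg G v : ℝ))^2| / 2)
            = (Real.pi * Δ^2 * (Δ^2 + |((deg G u : ℝ))^2 - ((deg G v : ℝ))^2| / 2)) / (2*δ^2)
            from by ring, le_div_iff₀ (by positivity : (0:ℝ) < 2*δ^2)]
        nlinarith [mul_le_mul_of_nonneg_left this hπ.le]
    have hsum := Finset.sum_le_sum key
    calc SO4 G = ∑ e ∈ G.edgeFinset, (1/2) * F4 e := by rw [hSO4, Finset.mul_sum]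
      _ ≤ ∑ e ∈ G.edgeFinset, Real.pi * Δ^2 / (2*δ^2) * (Δ^2 + F1 e / 2) := hsum
      _ = Real.pi * Δ^2 / (2*δ^2) * ((numEdges G : ℝ) * Δ^2 + SO1 G) := by
          rw [hSO1, hm]
          calc ∑ e ∈ G.edgeFinset, Real.pi * Δ^2 / (2*δ^2) * (Δ^2 + F1 e / 2)
              = (G.edgeFinset.card : ℝ) * (Real.pi * Δ^2 / (2*δ^2) * Δ^2)
                + ∑ e ∈ G.edgeFinset, (Real.pi * Δ^2 / (2*δ^2) / 2) * F1 e := by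
                rw [← nsmul_eq_mul, ← Finset.sum_const, ← Finset.sum_add_distrib]
                exact Finset.sum_congr rfl fun e _ => by ring
            _ = Real.pi * Δ^2 / (2*δ^2) * ((G.edgeFinset.card : ℝ) * Δ^2
                + (1/2) * ∑ e ∈ G.edgeFinset, F1 e) := by
                rw [← Finset.mul_sum]; ring
end

section
/- For any finite simple graph G with minimum degree δ ≥ 1 and maximum degree Δ: SO₆(G) ≤ 2π·(Δ² − δ²)·SO₁(G)/(√2 + 2δ√2)², where SO₆(G) = π·Σ_{uv∈E(G)} (|d_u² − d_v²|/(√2 + 2√(d_u² + d_v²)))². -/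
open Finset

lemma key_ineq (δ Δ a b : ℝ) (hδ0 : 0 ≤ δ) (ha1 : δ ≤ a) (hb1 : δ ≤ b)
    (ha2 : a ≤ Δ) (hb2 : b ≤ Δ) :
    ((a^2 - b^2) / (Real.sqrt 2 + 2 * Real.sqrt (a^2 + b^2)))^2 * Real.pi
      ≤ Real.pi * (Δ^2 - δ^2) / (Real.sqrt 2 + 2*δ*Real.sqrt 2)^2 * |a^2 - b^2| := by
  have h2 : (0:ℝ) < Real.sqrt 2 := by positivity
  have hd0 : (0:ℝ) < Real.sqrt 2 + 2*δ*Real.sqrt 2 := by positivity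
  have hsq : δ * Real.sqrt 2 ≤ Real.sqrt (a^2 + b^2) := by
    have h1 : δ * Real.sqrt 2 = Real.sqrt (2 * δ^2) := by
      rw [Real.sqrt_mul (by norm_num), Real.sqrt_sq hδ0]; ring
    rw [h1]
    exact Real.sqrt_le_sqrt (by nlinarith)
  have hdD : Real.sqrt 2 + 2*δ*Real.sqrt 2 ≤ Real.sqrt 2 + 2 * Real.sqrt (a^2+b^2) := by
    nlinarith
  have habs : |a^2 - b^2| ≤ Δ^2 - δ^2 := by
    rw [abs_le]; constructor <;> nlinarith
  have hx2 : (a^2-b^2)^2 ≤ (Δ^2-δ^2) * |a^2-b^2| := by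
    nlinarith [sq_abs (a^2-b^2), abs_nonneg (a^2-b^2)]
  have h1 : ((a^2-b^2) / (Real.sqrt 2 + 2 * Real.sqrt (a^2+b^2)))^2
      ≤ (a^2-b^2)^2 / (Real.sqrt 2 + 2*δ*Real.sqrt 2)^2 := by
    rw [div_pow]
    exact div_le_div_of_nonneg_left (by positivity) (by positivity)
      (by nlinarith)
  have h3 : ((a^2-b^2) / (Real.sqrt 2 + 2 * Real.sqrt (a^2+b^2)))^2
      ≤ (Δ^2-δ^2) * |a^2-b^2| / (Real.sqrt 2 + 2*δ*Real.sqrt 2)^2 := by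
    refine h1.trans ?_
    exact div_le_div_of_nonneg_right hx2 (by positivity) |>.trans_eq rfl
  calc ((a^2 - b^2) / (Real.sqrt 2 + 2 * Real.sqrt (a^2 + b^2)))^2 * Real.pi
      ≤ (Δ^2-δ^2) * |a^2-b^2| / (Real.sqrt 2 + 2*δ*Real.sqrt 2)^2 * Real.pi := by
        exact mul_le_mul_of_nonneg_right h3 Real.pi_pos.le
    _ = Real.pi * (Δ^2 - δ^2) / (Real.sqrt 2 + 2*δ*Real.sqrt 2)^2 * |a^2 - b^2| := by ring

lemma minDeg_le_deg {V : Type*} [Fintype V] [Nonempty V] (G : SimpleGraph V) (v : V) :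
    minDeg G ≤ deg G v := by
  unfold deg minDeg
  convert G.minDegree_le_degree v using 2

lemma deg_le_maxDeg {V : Type*} [Fintype V] (G : SimpleGraph V) (v : V) :
    deg G v ≤ maxDeg G := by
  unfold deg maxDeg
  convert G.degree_le_maxDegree v using 2

theorem SO6_bound {V : Type*} [Fintype V] [Nonempty V] (G : SimpleGraph V)
    (hδ : 1 ≤ minDeg G) :
    SO6 G ≤ 2 * Real.pi * (((maxDeg G : ℝ))^2 - ((minDeg G : ℝ))^2) * SO1 G /
      (Real.sqrt 2 + 2 * (minDeg G : ℝ) * Real.sqrt 2)^2 := by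
  classical
  set δ := (minDeg G : ℝ) with hδdef
  set Δ := (maxDeg G : ℝ) with hΔdef
  set c := Real.pi * (Δ^2 - δ^2) / (Real.sqrt 2 + 2*δ*Real.sqrt 2)^2 with hc
  have hkey : SO6 G ≤ c * edgeDegSum G (fun a b => |(a : ℝ)^2 - (b : ℝ)^2|)
      (fun a b => by beta_reduce; rw [abs_sub_comm]) := by
    unfold SO6 edgeDegSum
    rw [Finset.mul_sum]
    apply Finset.sum_le_sum
    intro e _
    induction e using Sym2.ind with
    | _ u v =>
      simp only [Sym2.lift_mk]
      rw [hc]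
      rw [hδdef, hΔdef]
      apply key_ineq _ _ _ _ (by positivity)
      · exact_mod_cast minDeg_le_deg G u
      · exact_mod_cast minDeg_le_deg G v
      · exact_mod_cast deg_le_maxDeg G u
      · exact_mod_cast deg_le_maxDeg G v
  have hso1 : edgeDegSum G (fun a b => |(a : ℝ)^2 - (b : ℝ)^2|)
      (fun a b => by beta_reduce; rw [abs_sub_comm]) = 2 * SO1 G := by
    unfold SO1; ring
  rw [hso1] at hkey
  refine hkey.trans_eq ?_
  rw [hc]; ring
end
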